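/- Let n be a natural number and let X, Y be nonzero n×n complex matrices. Then sin² Θ(|X*|,|Y*|) + sin² Θ(|X|,|Y|) ≤ 2 sin² Θ(X,Y). -/

import Mathlib

/-!
For `H = [0 X; Xᴴ 0]` one has `|H| = [|Xᴴ| 0; 0 |X|]`, so `|H| + H = [|Xᴴ| X; Xᴴ |X|]` is positive
semidefinite. The trace of a product of two positive semidefinite matrices is nonnegative; applied
to these block matrices for `±X` and `Y` it gives `2 |Re Tr(YᴴX)| ≤ Re Tr(|Yᴴ||Xᴴ|) + Re Tr(|Y||X|)`,
hence `2 (Re Tr YᴴX)² ≤ (Re Tr |Yᴴ||Xᴴ|)² + (Re Tr |Y||X|)²`. Since `|X|` and `|Xᴴ|` have the same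
Hilbert–Schmidt norm as `X`, dividing by `‖X‖₂² ‖Y‖₂²` and using `sin² (arccos t) = 1 - t²` (which
Cauchy–Schwarz makes applicable) gives the claim.
-/

open Matrix
open scoped ComplexOrder

/-- Hilbert–Schmidt (Frobenius) norm: ‖X‖₂ = √(Re Tr(XᴴX)). -/
noncomputable def hsNorm {n : ℕ} (X : Matrix (Fin n) (Fin n) ℂ) : ℝ :=
  Real.sqrt ((Matrix.trace (Xᴴ * X)).re)

/-- Angle Θ(X,Y) = arccos(Re Tr(YᴴX) / (‖X‖₂‖Y‖₂)). -/
noncomputable def theta {n : ℕ} (X Y : Matrix (Fin n) (Fin n) ℂ) : ℝ :=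
  Real.arccos ((Matrix.trace (Yᴴ * X)).re / (hsNorm X * hsNorm Y))

/-- |X| : the positive semidefinite square root of XᴴX. -/
noncomputable def matAbs {n : ℕ} (X : Matrix (Fin n) (Fin n) ℂ) : Matrix (Fin n) (Fin n) ℂ :=
  (Matrix.posSemidef_conjTranspose_mul_self X).1.eigenvectorUnitary.1 *
    diagonal ((↑) ∘ Real.sqrt ∘ (Matrix.posSemidef_conjTranspose_mul_self X).1.eigenvalues) *
    (star (Matrix.posSemidef_conjTranspose_mul_self X).1.eigenvectorUnitary : Matrix (Fin n) (Fin n) ℂ)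

open scoped MatrixOrder

namespace Matrix

variable {𝕜 : Type*} [RCLike 𝕜] {m n : Type*} [Fintype m] [Fintype n]

theorem trace_fromBlocks {R : Type*} [AddCommMonoid R] (A : Matrix m m R) (B : Matrix m n R)
    (C : Matrix n m R) (D : Matrix n n R) : trace (fromBlocks A B C D) = trace A + trace D := by
  simp [trace, Fintype.sum_sum_type]

variable [DecidableEq m] [DecidableEq n]

theorem trace_mul_nonneg {A B : Matrix m m 𝕜} (hA : 0 ≤ A) (hB : 0 ≤ B) : 0 ≤ trace (A * B) := by
  obtain ⟨S, rfl⟩ := CStarAlgebra.nonneg_iff_eq_star_mul_self.mp hB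
  rw [← mul_assoc, trace_mul_cycle]
  exact (star_right_conjugate_nonneg hA S).posSemidef.trace_nonneg

theorem fromBlocks_zero_nonneg {A : Matrix m m 𝕜} {D : Matrix n n 𝕜} (hA : 0 ≤ A) (hD : 0 ≤ D) :
    0 ≤ fromBlocks A 0 0 D := by
  obtain ⟨S, rfl⟩ := CStarAlgebra.nonneg_iff_eq_star_mul_self.mp hA
  obtain ⟨T, rfl⟩ := CStarAlgebra.nonneg_iff_eq_star_mul_self.mp hD
  convert star_mul_self_nonneg (fromBlocks S 0 0 T) using 1
  simp [star_eq_conjTranspose, fromBlocks_conjTranspose, fromBlocks_multiply]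

theorem conjTranspose_cfcAbs (X : Matrix n n 𝕜) : (CFC.abs X)ᴴ = CFC.abs X :=
  (CFC.abs_nonneg X).isSelfAdjoint

theorem cfcAbs_fromBlocks_zero (X : Matrix n n 𝕜) :
    CFC.abs (fromBlocks 0 X Xᴴ 0) = fromBlocks (CFC.abs Xᴴ) 0 0 (CFC.abs X) := by
  refine CFC.sqrt_unique ?_ (fromBlocks_zero_nonneg (CFC.abs_nonneg _) (CFC.abs_nonneg _))
  simp [fromBlocks_multiply, CFC.abs_mul_abs, star_eq_conjTranspose, fromBlocks_conjTranspose]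

theorem fromBlocks_cfcAbs_nonneg (X : Matrix n n 𝕜) :
    0 ≤ fromBlocks (CFC.abs Xᴴ) X Xᴴ (CFC.abs X) := by
  have hH : IsSelfAdjoint (fromBlocks 0 X Xᴴ 0) :=
    IsHermitian.fromBlocks isHermitian_zero rfl isHermitian_zero
  have habs := CFC.abs_add_self _ hH
  rw [cfcAbs_fromBlocks_zero, fromBlocks_add, add_zero, zero_add, zero_add, add_zero] at habs
  rw [habs]
  exact smul_nonneg zero_le_two (CFC.posPart_nonneg _)

theorem re_trace_add_two_mul_re_trace_nonneg (X Y : Matrix n n 𝕜) :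
    0 ≤ RCLike.re (trace (CFC.abs Yᴴ * CFC.abs Xᴴ)) + RCLike.re (trace (CFC.abs Y * CFC.abs X))
      + 2 * RCLike.re (trace (Yᴴ * X)) := by
  have h := RCLike.nonneg_iff.mp
    (trace_mul_nonneg (fromBlocks_cfcAbs_nonneg Y) (fromBlocks_cfcAbs_nonneg X)) |>.1
  have hconj : RCLike.re (trace (Y * Xᴴ)) = RCLike.re (trace (Yᴴ * X)) := by
    rw [← conjTranspose_conjTranspose Y, ← conjTranspose_conjTranspose X, ← conjTranspose_mul,
      trace_conjTranspose, RCLike.star_def, RCLike.conj_re, conjTranspose_conjTranspose,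
      conjTranspose_conjTranspose, trace_mul_comm]
  rw [fromBlocks_multiply, trace_fromBlocks, trace_add, trace_add, map_add, map_add, map_add,
    hconj] at h
  linarith

theorem two_mul_abs_re_trace_le (X Y : Matrix n n 𝕜) :
    2 * |RCLike.re (trace (Yᴴ * X))| ≤
      RCLike.re (trace (CFC.abs Yᴴ * CFC.abs Xᴴ)) + RCLike.re (trace (CFC.abs Y * CFC.abs X)) := by
  have hpos := re_trace_add_two_mul_re_trace_nonneg X Y
  have hneg := re_trace_add_two_mul_re_trace_nonneg (-X) Y
  simp only [conjTranspose_neg, CFC.abs_neg, mul_neg, trace_neg, map_neg] at hneg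
  rw [← abs_two, ← abs_mul, abs_le]
  constructor <;> linarith

end Matrix

lemma matAbs_eq_cfcAbs {n : ℕ} (X : Matrix (Fin n) (Fin n) ℂ) : matAbs X = CFC.abs X := by
  have hXX := posSemidef_conjTranspose_mul_self X
  rw [CFC.abs, star_eq_conjTranspose, CFC.sqrt_eq_real_sqrt _ hXX.nonneg, cfcₙ_eq_cfc,
    hXX.1.cfc_eq, IsHermitian.cfc, Unitary.conjStarAlgAut_apply]
  rfl

lemma abs_re_trace_conjTranspose_mul_le {n : ℕ} (A B : Matrix (Fin n) (Fin n) ℂ) :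
    |(trace (Bᴴ * A)).re| ≤ hsNorm A * hsNorm B := by
  -- the inner product induced by `1` is `⟪x, y⟫ = Tr (y * xᴴ)`
  let _ := (1 : Matrix (Fin n) (Fin n) ℂ).toMatrixSeminormedAddCommGroup PosSemidef.one
  let _ := toMatrixInnerProductSpace (1 : Matrix (Fin n) (Fin n) ℂ) PosSemidef.one
  have hnorm (C : Matrix (Fin n) (Fin n) ℂ) : ‖Cᴴ‖ = hsNorm C := by
    rw [norm_eq_sqrt_re_inner (𝕜 := ℂ), hsNorm]
    show √(trace (Cᴴ * 1 * Cᴴᴴ)).re = _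
    rw [mul_one, conjTranspose_conjTranspose]
  have hinner : inner ℂ Aᴴ Bᴴ = trace (Bᴴ * A) := by
    show trace (Bᴴ * 1 * Aᴴᴴ) = _
    rw [mul_one, conjTranspose_conjTranspose]
  calc |(trace (Bᴴ * A)).re| ≤ ‖inner ℂ Aᴴ Bᴴ‖ := hinner ▸ Complex.abs_re_le_norm _
    _ ≤ ‖Aᴴ‖ * ‖Bᴴ‖ := norm_inner_le_norm _ _
    _ = hsNorm A * hsNorm B := by rw [hnorm, hnorm]

lemma hsNorm_conjTranspose {n : ℕ} (X : Matrix (Fin n) (Fin n) ℂ) : hsNorm Xᴴ = hsNorm X := by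
  rw [hsNorm, hsNorm, conjTranspose_conjTranspose, trace_mul_comm]

lemma hsNorm_cfcAbs {n : ℕ} (X : Matrix (Fin n) (Fin n) ℂ) : hsNorm (CFC.abs X) = hsNorm X := by
  rw [hsNorm, hsNorm, conjTranspose_cfcAbs, CFC.abs_mul_abs, star_eq_conjTranspose]

lemma sin_theta_sq {n : ℕ} (A B : Matrix (Fin n) (Fin n) ℂ) :
    Real.sin (theta A B) ^ 2 = 1 - ((trace (Bᴴ * A)).re / (hsNorm A * hsNorm B)) ^ 2 := by
  have hcos : |(trace (Bᴴ * A)).re / (hsNorm A * hsNorm B)| ≤ 1 := by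
    rw [abs_div]
    exact div_le_one_of_le₀ ((abs_re_trace_conjTranspose_mul_le A B).trans (le_abs_self _))
      (abs_nonneg _)
  rw [theta, Real.sin_arccos, Real.sq_sqrt (sub_nonneg.mpr ((sq_le_one_iff_abs_le_one _).mpr hcos))]

lemma one_sub_div_sq_add_one_sub_div_sq_le {a b c N : ℝ} (h : 2 * |c| ≤ a + b) :
    1 - (a / N) ^ 2 + (1 - (b / N) ^ 2) ≤ 2 * (1 - (c / N) ^ 2) := by
  have hsq : 2 * c ^ 2 ≤ a ^ 2 + b ^ 2 := by
    nlinarith [sq_abs c, abs_nonneg c, sq_nonneg (a - b)]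
  have := div_le_div_of_nonneg_right hsq (sq_nonneg N)
  rw [div_pow, div_pow, div_pow]
  rw [add_div, mul_div_assoc] at this
  linarith

theorem stmt_10_general {n : ℕ} (X Y : Matrix (Fin n) (Fin n) ℂ) :
    Real.sin (theta (matAbs Xᴴ) (matAbs Yᴴ)) ^ 2 + Real.sin (theta (matAbs X) (matAbs Y)) ^ 2 ≤
      2 * Real.sin (theta X Y) ^ 2 := by
  simp only [sin_theta_sq, matAbs_eq_cfcAbs, hsNorm_cfcAbs, hsNorm_conjTranspose,
    conjTranspose_cfcAbs]
  exact one_sub_div_sq_add_one_sub_div_sq_le (two_mul_abs_re_trace_le X Y)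

theorem stmt_10 {n : ℕ} (X Y : Matrix (Fin n) (Fin n) ℂ) (hX : X ≠ 0) (hY : Y ≠ 0) :
    Real.sin (theta (matAbs Xᴴ) (matAbs Yᴴ)) ^ 2 + Real.sin (theta (matAbs X) (matAbs Y)) ^ 2 ≤
      2 * Real.sin (theta X Y) ^ 2 :=
  stmt_10_general X Y
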